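/- Let Z follow a Beta(a,b) distribution with a, b > 0. If z < a/(a+b) then P(Z ≤ z) < z^a (1−z)^b / (B(a,b)·(a − (a+b)z)), and if z > a/(a+b) then P(Z > z) < z^a (1−z)^b / (B(a,b)·((a+b)z − a)). -/

import Mathlib

open MeasureTheory Real

/-- The Beta function `B(a,b) = Γ(a)Γ(b)/Γ(a+b)`. -/
noncomputable def betaFun (a b : ℝ) : ℝ := Real.Gamma a * Real.Gamma b / Real.Gamma (a + b)

/-- The density of the Beta(a,b) distribution on `[0,1]`. -/
noncomputable def betaPDF (a b x : ℝ) : ℝ :=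
  if x ∈ Set.Icc (0 : ℝ) 1 then x ^ (a - 1) * (1 - x) ^ (b - 1) / betaFun a b else 0

/-!
With `g x = x^a (1-x)^b` one has `g' x = x^(a-1) (1-x)^(b-1) (a - (a+b) x)`. For `z < a/(a+b)`
the last factor exceeds `a - (a+b) z > 0` on `(0, z)`, so integrating over `[0, z]` gives
`(a - (a+b) z) ∫₀ᶻ x^(a-1) (1-x)^(b-1) < g z`, which is the lower-tail bound. The upper tail of
`Beta(a,b)` at `z` is the lower tail of `Beta(b,a)` at `1 - z`.
-/

open Set intervalIntegral

lemma betaFun_pos {a b : ℝ} (ha : 0 < a) (hb : 0 < b) : 0 < betaFun a b :=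
  div_pos (mul_pos (Gamma_pos_of_pos ha) (Gamma_pos_of_pos hb)) (Gamma_pos_of_pos (add_pos ha hb))

lemma betaFun_comm (a b : ℝ) : betaFun a b = betaFun b a := by
  rw [betaFun, betaFun, mul_comm, add_comm]

lemma betaPDF_of_mem {a b x : ℝ} (hx : x ∈ Icc (0 : ℝ) 1) :
    betaPDF a b x = x ^ (a - 1) * (1 - x) ^ (b - 1) / betaFun a b :=
  if_pos hx

lemma betaPDF_of_notMem {a b x : ℝ} (hx : x ∉ Icc (0 : ℝ) 1) : betaPDF a b x = 0 :=
  if_neg hx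

lemma betaPDF_one_sub (a b x : ℝ) : betaPDF a b (1 - x) = betaPDF b a x := by
  by_cases hx : x ∈ Icc (0 : ℝ) 1
  · have hx' : 1 - x ∈ Icc (0 : ℝ) 1 := ⟨by linarith [hx.2], by linarith [hx.1]⟩
    rw [betaPDF_of_mem hx, betaPDF_of_mem hx', sub_sub_cancel, betaFun_comm, mul_comm]
  · have hx' : 1 - x ∉ Icc (0 : ℝ) 1 := fun h => hx ⟨by linarith [h.2], by linarith [h.1]⟩
    rw [betaPDF_of_notMem hx, betaPDF_of_notMem hx']

lemma setIntegral_Iic_betaPDF (a b : ℝ) {z : ℝ} (hz : 0 ≤ z) :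
    ∫ x in Iic z, betaPDF a b x = ∫ x in 0..z, betaPDF a b x := by
  rw [integral_of_le hz, ← integral_Icc_eq_integral_Ioc]
  exact setIntegral_eq_of_subset_of_forall_sdiff_eq_zero measurableSet_Iic
    Icc_subset_Iic_self fun x ⟨hxz, hx⟩ => betaPDF_of_notMem fun h => hx ⟨h.1, hxz⟩

lemma setIntegral_Ioi_betaPDF (a b : ℝ) {z : ℝ} (hz : z ≤ 1) :
    ∫ x in Ioi z, betaPDF a b x = ∫ x in z..1, betaPDF a b x := by
  rw [integral_of_le hz]
  exact setIntegral_eq_of_subset_of_forall_sdiff_eq_zero measurableSet_Ioi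
    Ioc_subset_Ioi_self fun x ⟨hzx, hx⟩ => betaPDF_of_notMem fun h => hx ⟨hzx, h.2⟩

lemma intervalIntegral_betaPDF_eq_one_sub (a b z : ℝ) :
    ∫ x in z..1, betaPDF a b x = ∫ x in 0..1 - z, betaPDF b a x := by
  simpa [betaPDF_one_sub] using integral_comp_sub_left (fun x => betaPDF b a x) (a := z) (b := 1) 1

lemma hasDerivAt_rpow_mul_one_sub_rpow (a b : ℝ) {x : ℝ} (hx0 : 0 < x) (hx1 : x < 1) :
    HasDerivAt (fun x => x ^ a * (1 - x) ^ b)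
      (x ^ (a - 1) * (1 - x) ^ (b - 1) * (a - (a + b) * x)) x := by
  have h1x : 1 - x ≠ 0 := by linarith
  have hleft : HasDerivAt (fun x : ℝ => x ^ a) (a * x ^ (a - 1)) x :=
    hasDerivAt_rpow_const (Or.inl hx0.ne')
  have hright : HasDerivAt (fun x : ℝ => (1 - x) ^ b) (b * (1 - x) ^ (b - 1) * (-1)) x :=
    (hasDerivAt_rpow_const (Or.inl h1x)).comp x ((hasDerivAt_id x).const_sub 1)
  refine (hleft.mul hright).congr_deriv ?_
  have hxa : x ^ a = x ^ (a - 1) * x := by rw [rpow_sub_one hx0.ne', div_mul_cancel₀ _ hx0.ne']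
  have hxb : (1 - x) ^ b = (1 - x) ^ (b - 1) * (1 - x) := by
    rw [rpow_sub_one h1x, div_mul_cancel₀ _ h1x]
  rw [hxa, hxb]
  ring

lemma intervalIntegrable_rpow_mul_one_sub_rpow {a : ℝ} (b : ℝ) (ha : 0 < a) {z : ℝ} (hz : z < 1) :
    IntervalIntegrable (fun x => x ^ (a - 1) * (1 - x) ^ (b - 1)) volume 0 z := by
  refine (intervalIntegrable_rpow' (by linarith)).mul_continuousOn
    (ContinuousOn.rpow_const (f := fun x => 1 - x) (by fun_prop) fun x hx => Or.inl ?_)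
  have : x ≤ max 0 z := hx.2
  linarith [max_lt (zero_lt_one' ℝ) hz]

lemma integral_rpow_mul_one_sub_rpow_mul {a : ℝ} (b : ℝ) (ha : 0 < a) {z : ℝ}
    (hz0 : 0 ≤ z) (hz1 : z < 1) :
    ∫ x in 0..z, x ^ (a - 1) * (1 - x) ^ (b - 1) * (a - (a + b) * x) = z ^ a * (1 - z) ^ b := by
  have hderiv_int := (intervalIntegrable_rpow_mul_one_sub_rpow b ha hz1).mul_continuousOn
    (g := fun x => a - (a + b) * x) (by fun_prop)
  rw [integral_eq_sub_of_hasDeriv_right_of_le (f := fun x => x ^ a * (1 - x) ^ b) hz0 ?_ ?_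
    hderiv_int, zero_rpow ha.ne', zero_mul, sub_zero]
  · refine ContinuousOn.mul (continuousOn_id.rpow_const fun _ _ => Or.inr ha.le) ?_
    refine ContinuousOn.rpow_const (f := fun x => 1 - x) (by fun_prop) fun x hx => Or.inl ?_
    linarith [hx.2]
  · exact fun x hx => (hasDerivAt_rpow_mul_one_sub_rpow a b hx.1 (hx.2.trans hz1)).hasDerivWithinAt

lemma mul_integral_rpow_mul_one_sub_rpow_lt {a b z : ℝ} (ha : 0 < a) (hab : 0 < a + b)
    (hz0 : 0 < z) (hz1 : z < 1) :
    (a - (a + b) * z) * ∫ x in 0..z, x ^ (a - 1) * (1 - x) ^ (b - 1) < z ^ a * (1 - z) ^ b := by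
  have hint := intervalIntegrable_rpow_mul_one_sub_rpow b ha hz1
  have hgap_int := hint.mul_continuousOn (g := fun x => (a + b) * (z - x)) (by fun_prop)
  have hgap : 0 < ∫ x in 0..z, x ^ (a - 1) * (1 - x) ^ (b - 1) * ((a + b) * (z - x)) := by
    refine intervalIntegral_pos_of_pos_on hgap_int (fun x hx => ?_) hz0
    have h1x : 0 < 1 - x := by linarith [hx.2]
    exact mul_pos (mul_pos (rpow_pos_of_pos hx.1 _) (rpow_pos_of_pos h1x _))
      (mul_pos hab (sub_pos.2 hx.2))
  have hsplit : ∫ x in 0..z, x ^ (a - 1) * (1 - x) ^ (b - 1) * (a - (a + b) * x) =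
      (a - (a + b) * z) * (∫ x in 0..z, x ^ (a - 1) * (1 - x) ^ (b - 1)) +
        ∫ x in 0..z, x ^ (a - 1) * (1 - x) ^ (b - 1) * ((a + b) * (z - x)) := by
    rw [← intervalIntegral.integral_const_mul,
      ← intervalIntegral.integral_add (hint.const_mul _) hgap_int]
    congr 1
    ext x
    ring
  rw [integral_rpow_mul_one_sub_rpow_mul b ha hz0.le hz1] at hsplit
  linarith

lemma intervalIntegral_betaPDF_lt {a b z : ℝ} (ha : 0 < a) (hb : 0 < b) (hz0 : 0 < z)
    (hz1 : z < 1) (hza : z < a / (a + b)) :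
    ∫ x in 0..z, betaPDF a b x < z ^ a * (1 - z) ^ b / (betaFun a b * (a - (a + b) * z)) := by
  have hab : 0 < a + b := add_pos ha hb
  have hc : 0 < a - (a + b) * z := by linarith [(lt_div_iff₀ hab).mp hza]
  have hdensity : EqOn (betaPDF a b) (fun x => x ^ (a - 1) * (1 - x) ^ (b - 1) / betaFun a b)
      (uIcc 0 z) := by
    intro x hx
    rw [uIcc_of_le hz0.le] at hx
    exact betaPDF_of_mem ⟨hx.1, hx.2.trans hz1.le⟩
  rw [integral_congr hdensity, intervalIntegral.integral_div, div_lt_div_iff₀ (betaFun_pos ha hb)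
    (mul_pos (betaFun_pos ha hb) hc)]
  have := mul_lt_mul_of_pos_right (mul_integral_rpow_mul_one_sub_rpow_lt ha hab hz0 hz1)
    (betaFun_pos ha hb)
  linarith

theorem beta_cdf_sharp_bounds (a b z : ℝ) (ha : 0 < a) (hb : 0 < b)
    (hz : z ∈ Set.Ioo (0 : ℝ) 1) :
    (z < a / (a + b) →
      (∫ x in Set.Iic z, betaPDF a b x) <
        z ^ a * (1 - z) ^ b / (betaFun a b * (a - (a + b) * z))) ∧
    (a / (a + b) < z →
      (∫ x in Set.Ioi z, betaPDF a b x) <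
        z ^ a * (1 - z) ^ b / (betaFun a b * ((a + b) * z - a))) := by
  obtain ⟨hz0, hz1⟩ := hz
  refine ⟨fun hza => ?_, fun hza => ?_⟩
  · rw [setIntegral_Iic_betaPDF a b hz0.le]
    exact intervalIntegral_betaPDF_lt ha hb hz0 hz1 hza
  · have hza' : 1 - z < b / (b + a) := by
      rw [add_comm b a, lt_div_iff₀ (add_pos ha hb)]
      rw [div_lt_iff₀ (add_pos ha hb)] at hza
      linarith
    rw [setIntegral_Ioi_betaPDF a b hz1.le, intervalIntegral_betaPDF_eq_one_sub]
    convert intervalIntegral_betaPDF_lt hb ha (sub_pos.2 hz1) (by linarith) hza' using 1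
    rw [sub_sub_cancel, betaFun_comm]
    ring
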